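/- arXiv:2203.10857 — 4 statements merged into one kernel-verified Lean document; each statement's English description precedes it below -/
import Mathlib

section
/- Let ρ be a positive definite Hermitian n×n matrix with trace 1. Then for every Hermitian matrix v with trace 0 there exists a Hermitian matrix a such that v = (ρa + aρ)/2 − Tr(ρa)·ρ. -/
open scoped ComplexOrder

/-!
The Jordan multiplication `a ↦ (ρa + aρ)/2` by a positive definite `ρ` is injective: if
`ρa = -aρ`, then `a` sends each eigenvector of `ρ`, with eigenvalue `λ > 0`, to a vector `y` with
`ρy = -λy`, which positivity forces to be `0`. Being an injective endomorphism of a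
finite-dimensional space it is bijective, and by uniqueness the preimage of a Hermitian `v` is
Hermitian, since `aᴴ` is a preimage too. Finally `Tr(ρa) = Tr{ρ,a} = Tr v = 0`, so the
correction term `Tr(ρa)·ρ` vanishes.
-/

namespace Matrix

variable {𝕜 : Type*} [RCLike 𝕜] {n : Type*} [Fintype n]

def jordanMulLeft (ρ : Matrix n n 𝕜) : Matrix n n 𝕜 →ₗ[𝕜] Matrix n n 𝕜 where
  toFun a := (1 / 2 : 𝕜) • (ρ * a + a * ρ)
  map_add' a b := by simp only [Matrix.mul_add, Matrix.add_mul]; module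
  map_smul' c a := by simp only [Matrix.mul_smul, Matrix.smul_mul, RingHom.id_apply]; module

@[simp]
lemma jordanMulLeft_apply (ρ a : Matrix n n 𝕜) :
    jordanMulLeft ρ a = (1 / 2 : 𝕜) • (ρ * a + a * ρ) := rfl

lemma trace_jordanMulLeft (ρ a : Matrix n n 𝕜) : (jordanMulLeft ρ a).trace = (ρ * a).trace := by
  rw [jordanMulLeft_apply, trace_smul, trace_add, trace_mul_comm a ρ, smul_eq_mul]
  ring

lemma IsHermitian.conjTranspose_jordanMulLeft {ρ : Matrix n n 𝕜} (hρ : ρ.IsHermitian)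
    (a : Matrix n n 𝕜) : (jordanMulLeft ρ a)ᴴ = jordanMulLeft ρ aᴴ := by
  simp only [jordanMulLeft_apply, conjTranspose_smul, conjTranspose_add, conjTranspose_mul, hρ.eq,
    add_comm (aᴴ * ρ)]
  congr 1
  simp

lemma PosDef.eq_zero_of_mulVec_eq_neg_smul {ρ : Matrix n n 𝕜} (hρ : ρ.PosDef) {c : ℝ}
    (hc : 0 ≤ c) {y : n → 𝕜} (hy : ρ *ᵥ y = -(c • y)) : y = 0 := by
  by_contra hne
  have hpos := hρ.dotProduct_mulVec_pos hne
  rw [hy, dotProduct_neg, dotProduct_smul, RCLike.real_smul_eq_coe_mul] at hpos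
  have : 0 ≤ (c : 𝕜) * (star y ⬝ᵥ y) :=
    mul_nonneg (RCLike.ofReal_nonneg.mpr hc) (dotProduct_star_self_nonneg y)
  exact (neg_nonpos.mpr this).not_gt hpos

lemma PosDef.injective_jordanMulLeft [DecidableEq n] {ρ : Matrix n n 𝕜} (hρ : ρ.PosDef) :
    Function.Injective (jordanMulLeft ρ) := by
  rw [← LinearMap.ker_eq_bot, LinearMap.ker_eq_bot']
  intro a ha
  have hanti : ρ * a = -(a * ρ) := by
    rw [jordanMulLeft_apply, smul_eq_zero] at ha
    exact eq_neg_of_add_eq_zero_left (ha.resolve_left (by norm_num))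
  set b := hρ.1.eigenvectorBasis
  have hkill : ∀ j, a *ᵥ b j = 0 := fun j ↦
    hρ.eq_zero_of_mulVec_eq_neg_smul (hρ.eigenvalues_pos j).le <| by
      rw [mulVec_mulVec, hanti, neg_mulVec, ← mulVec_mulVec, hρ.1.mulVec_eigenvectorBasis,
        mulVec_smul]
  apply toEuclideanLin.injective
  rw [map_zero]
  exact b.toBasis.ext fun j ↦ by simp [toLpLin_apply, hkill]

lemma PosDef.surjective_jordanMulLeft [DecidableEq n] {ρ : Matrix n n 𝕜} (hρ : ρ.PosDef) :
    Function.Surjective (jordanMulLeft ρ) :=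
  LinearMap.injective_iff_surjective.mp hρ.injective_jordanMulLeft

lemma PosDef.exists_isHermitian_jordanMulLeft_eq [DecidableEq n] {ρ v : Matrix n n 𝕜}
    (hρ : ρ.PosDef) (hv : v.IsHermitian) : ∃ a, a.IsHermitian ∧ jordanMulLeft ρ a = v := by
  obtain ⟨a, ha⟩ := hρ.surjective_jordanMulLeft v
  refine ⟨a, hρ.injective_jordanMulLeft ?_, ha⟩
  rw [← hρ.1.conjTranspose_jordanMulLeft, ha, hv.eq]

end Matrix

theorem jordan_identification_surjective_general (n : ℕ)
    (ρ : Matrix (Fin n) (Fin n) ℂ) (hρ : ρ.PosDef) :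
    ∀ v : Matrix (Fin n) (Fin n) ℂ, v.IsHermitian → v.trace = 0 →
      ∃ a : Matrix (Fin n) (Fin n) ℂ, a.IsHermitian ∧
        v = ((1 : ℂ) / 2) • (ρ * a + a * ρ) - (ρ * a).trace • ρ := by
  intro v hv hvtr
  obtain ⟨a, ha, rfl⟩ := hρ.exists_isHermitian_jordanMulLeft_eq hv
  refine ⟨a, ha, ?_⟩
  rw [← Matrix.trace_jordanMulLeft, hvtr, zero_smul, sub_zero, Matrix.jordanMulLeft_apply]

/-- For a faithful quantum state `ρ` (positive definite Hermitian, trace one), every traceless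
Hermitian matrix `v` can be written as `v = {ρ,a} − Tr(ρa)·ρ` for some Hermitian `a`,
where `{ρ,a} = (ρa + aρ)/2` is the Jordan product. -/
theorem jordan_identification_surjective (n : ℕ)
    (ρ : Matrix (Fin n) (Fin n) ℂ) (hρ : ρ.PosDef) (htr : ρ.trace = 1) :
    ∀ v : Matrix (Fin n) (Fin n) ℂ, v.IsHermitian → v.trace = 0 →
      ∃ a : Matrix (Fin n) (Fin n) ℂ, a.IsHermitian ∧
        v = ((1 : ℂ) / 2) • (ρ * a + a * ρ) - (ρ * a).trace • ρ :=
  jordan_identification_surjective_general n ρ hρ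
end

section
/- For any density matrix ρ and Hermitian matrix a, one has Tr(ρa²) + Tr(√ρ · a · √ρ · a) − 2(Tr(ρa))² ≥ 0, i.e. the Wigner–Yanase quadratic form is positive semidefinite. -/
open Matrix
open scoped ComplexOrder

/-- The positive semidefinite square root of a positive semidefinite matrix, as defined in the
older Mathlib (`Matrix.PosSemidef.sqrt`, since removed). -/
noncomputable def Matrix.PosSemidef.sqrt {n : Type*} [Fintype n] [DecidableEq n]
    {𝕜 : Type*} [RCLike 𝕜] {A : Matrix n n 𝕜} (hA : A.PosSemidef) : Matrix n n 𝕜 :=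
  (hA.1.eigenvectorUnitary : Matrix n n 𝕜) * diagonal ((↑) ∘ Real.sqrt ∘ hA.1.eigenvalues) *
  (star hA.1.eigenvectorUnitary : Matrix n n 𝕜)

/-!
Centre `a` at its mean `t = Tr(ρa)`. With `s = √ρ` and `b = a - t`, the Wigner–Yanase form of `a`
equals `Tr(s²b²) + Tr(sbsb)` (this uses `Tr ρ = 1`), which is half of `Tr((sb + bs)²)`; the latter
is nonnegative because `sb + bs` is Hermitian.
-/

namespace Matrix

variable {n : Type*} [Fintype n]

namespace PosSemidef

variable [DecidableEq n] {𝕜 : Type*} [RCLike 𝕜] {A : Matrix n n 𝕜}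

theorem sqrt_mul_self (hA : A.PosSemidef) : hA.sqrt * hA.sqrt = A := by
  have hD : diagonal (((↑) : ℝ → 𝕜) ∘ Real.sqrt ∘ hA.1.eigenvalues) *
      diagonal ((↑) ∘ Real.sqrt ∘ hA.1.eigenvalues) = diagonal ((↑) ∘ hA.1.eigenvalues) := by
    rw [diagonal_mul_diagonal]
    congr 1
    funext i
    simp [← RCLike.ofReal_mul, Real.mul_self_sqrt (hA.eigenvalues_nonneg i)]
  conv_rhs => rw [hA.1.spectral_theorem, Unitary.conjStarAlgAut_apply, ← hD]
  simp only [sqrt, Matrix.mul_assoc]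
  rw [← Matrix.mul_assoc (star _), Unitary.coe_star_mul_self, Matrix.one_mul]

theorem isHermitian_sqrt (hA : A.PosSemidef) : hA.sqrt.IsHermitian := by
  simp [IsHermitian, sqrt, star_eq_conjTranspose, conjTranspose_mul, diagonal_conjTranspose,
    Matrix.mul_assoc, Pi.star_def, Function.comp_def]

end PosSemidef

theorem IsHermitian.isSelfAdjoint_trace_mul {R : Type*} [CommRing R] [StarRing R]
    {A B : Matrix n n R} (hA : A.IsHermitian) (hB : B.IsHermitian) :
    IsSelfAdjoint (A * B).trace := by
  rw [IsSelfAdjoint, ← trace_conjTranspose, conjTranspose_mul, hA.eq, hB.eq, trace_mul_comm]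

section CommRing

variable {R : Type*} [CommRing R]

def anticommForm (s b : Matrix n n R) : R :=
  (s * s * (b * b)).trace + (s * b * s * b).trace

theorem trace_anticommutator_mul_self (s b : Matrix n n R) :
    ((s * b + b * s) * (s * b + b * s)).trace = 2 * anticommForm s b := by
  have expand : (s * b + b * s) * (s * b + b * s)
      = s * b * s * b + s * b * (b * s) + b * s * (s * b) + b * s * (b * s) := by
    noncomm_ring
  rw [expand, anticommForm]
  have e1 : (s * b * (b * s)).trace = (s * s * (b * b)).trace := by
    simpa only [Matrix.mul_assoc] using trace_mul_comm (s * b * b) s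
  have e2 : (b * s * (s * b)).trace = (s * s * (b * b)).trace := by
    simpa only [Matrix.mul_assoc] using trace_mul_comm b (s * s * b)
  have e3 : (b * s * (b * s)).trace = (s * b * s * b).trace := by
    simpa only [Matrix.mul_assoc] using trace_mul_comm b (s * b * s)
  rw [trace_add, trace_add, trace_add, e1, e2, e3]
  ring

theorem anticommForm_sub_smul_one [DecidableEq n] (s a : Matrix n n R) (t : R) :
    anticommForm s (a - t • 1) =
      anticommForm s a - 4 * t * (s * s * a).trace + 2 * t ^ 2 * (s * s).trace := by
  simp only [anticommForm, Matrix.mul_sub, Matrix.sub_mul, Matrix.mul_smul, Matrix.smul_mul,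
    Matrix.mul_one, Matrix.one_mul, trace_sub, trace_smul, smul_eq_mul]
  rw [trace_mul_cycle s a s]
  ring

end CommRing

theorem IsHermitian.anticommForm_nonneg {𝕜 : Type*} [RCLike 𝕜] {s b : Matrix n n 𝕜}
    (hs : s.IsHermitian) (hb : b.IsHermitian) : 0 ≤ anticommForm s b := by
  have hM : (s * b + b * s).IsHermitian := by
    rw [IsHermitian, conjTranspose_add, conjTranspose_mul, conjTranspose_mul, hs.eq, hb.eq,
      add_comm]
  have h := (posSemidef_conjTranspose_mul_self (s * b + b * s)).trace_nonneg
  rw [hM.eq, trace_anticommutator_mul_self] at h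
  simpa using mul_nonneg (inv_nonneg.mpr zero_le_two) h

end Matrix

/-- For any density matrix `ρ` with positive semidefinite square root `√ρ` and any Hermitian
matrix `a`, `Tr(ρa²) + Tr(√ρ·a·√ρ·a) − 2(Tr(ρa))² ≥ 0`: the Wigner–Yanase quadratic form is
positive semidefinite. -/
theorem wignerYanase_form_posSemidef (n : ℕ)
    (ρ : Matrix (Fin n) (Fin n) ℂ) (hρ : ρ.PosSemidef) (htr : ρ.trace = 1)
    (a : Matrix (Fin n) (Fin n) ℂ) (ha : a.IsHermitian) :
    0 ≤ ((ρ * (a * a)).trace + (hρ.sqrt * a * hρ.sqrt * a).trace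
        - 2 * ((ρ * a).trace) ^ 2).re := by
  set t := (ρ * a).trace
  have hb : (a - t • 1).IsHermitian :=
    ha.sub (isHermitian_one.smul (hρ.1.isSelfAdjoint_trace_mul ha))
  have h := hρ.isHermitian_sqrt.anticommForm_nonneg hb
  rw [anticommForm_sub_smul_one, anticommForm, hρ.sqrt_mul_self, htr] at h
  convert (Complex.nonneg_iff.mp h).1 using 2
  ring
end

section
/- For any density matrix ρ (positive definite, trace 1) and Hermitian matrix a, ∫₀¹ Tr(ρ^λ a ρ^{1−λ} a) dλ − (Tr(ρa))² ≥ 0, i.e. the Bogoliubov–Kubo–Mori quadratic form is positive semidefinite. -/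
open Matrix
open scoped ComplexOrder

/-- The power `ρ^λ` of `ρ = U diag(p) U†` by spectral calculus. -/
noncomputable def spectralRpow {n : ℕ} (U : Matrix (Fin n) (Fin n) ℂ) (p : Fin n → ℝ)
    (l : ℝ) : Matrix (Fin n) (Fin n) ℂ :=
  U * Matrix.diagonal (fun i => ((p i ^ l : ℝ) : ℂ)) * Uᴴ

lemma trace_conj_unitary {n : ℕ} (U M : Matrix (Fin n) (Fin n) ℂ)
    (hU : Uᴴ * U = 1) : (U * M * Uᴴ).trace = M.trace := by
  rw [Matrix.trace_mul_comm, ← Matrix.mul_assoc, hU, Matrix.one_mul]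

lemma trace_diag_form {n : ℕ} (d₁ d₂ : Fin n → ℝ) (b : Matrix (Fin n) (Fin n) ℂ)
    (hb : b.IsHermitian) :
    ((Matrix.diagonal (fun i => ((d₁ i : ℝ) : ℂ)) * b *
      Matrix.diagonal (fun i => ((d₂ i : ℝ) : ℂ)) * b).trace).re
    = ∑ i, ∑ j, d₁ i * d₂ j * Complex.normSq (b i j) := by
  have hji : ∀ i j, b j i = starRingEnd ℂ (b i j) := fun i j => by
    conv_lhs => rw [← hb]
    rfl
  have entry : ∀ i, (Matrix.diagonal (fun i => ((d₁ i : ℝ) : ℂ)) * b *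
      Matrix.diagonal (fun i => ((d₂ i : ℝ) : ℂ)) * b) i i
      = ∑ j, ((d₁ i : ℂ) * b i j * (d₂ j : ℂ)) * b j i := by
    intro i
    rw [Matrix.mul_apply]
    refine Finset.sum_congr rfl fun j _ => ?_
    rw [Matrix.mul_diagonal, Matrix.diagonal_mul]
  simp only [Matrix.trace, Matrix.diag, entry, Complex.re_sum]
  refine Finset.sum_congr rfl fun i _ => ?_
  refine Finset.sum_congr rfl fun j _ => ?_
  rw [hji i j]
  rw [show (d₁ i : ℂ) * b i j * (d₂ j : ℂ) * starRingEnd ℂ (b i j)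
      = ((d₁ i * d₂ j : ℝ) : ℂ) * (b i j * starRingEnd ℂ (b i j)) by push_cast; ring]
  rw [Complex.mul_conj]
  push_cast
  simp

/-- For a positive definite trace-one `ρ = U diag(p) U†` and Hermitian `a`, the
Bogoliubov–Kubo–Mori quadratic form `∫₀¹ Tr(ρ^λ a ρ^{1−λ} a) dλ − (Tr(ρa))²` is nonnegative. -/
theorem bkm_form_posSemidef (n : ℕ)
    (U : Matrix (Fin n) (Fin n) ℂ) (hU : Uᴴ * U = 1)
    (p : Fin n → ℝ) (hp : ∀ i, 0 < p i)
    (ρ : Matrix (Fin n) (Fin n) ℂ)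
    (hρ : ρ = U * Matrix.diagonal (fun i => ((p i : ℝ) : ℂ)) * Uᴴ)
    (htr : ρ.trace = 1)
    (a : Matrix (Fin n) (Fin n) ℂ) (ha : a.IsHermitian) :
    (((ρ * a).trace).re) ^ 2 ≤
      ∫ l in (0:ℝ)..1, ((spectralRpow U p l * a * spectralRpow U p (1 - l) * a).trace).re := by
  have hUU : U * Uᴴ = 1 := mul_eq_one_comm.mp hU
  set b : Matrix (Fin n) (Fin n) ℂ := Uᴴ * a * U with hbdef
  have hb : b.IsHermitian := by
    unfold Matrix.IsHermitian
    simp [hbdef, Matrix.conjTranspose_mul, Matrix.mul_assoc, ha.eq]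
  -- trace of ρ gives ∑ p = 1
  have hsum : ∑ i, p i = 1 := by
    have h1 : ρ.trace = ∑ i, ((p i : ℝ) : ℂ) := by
      rw [hρ, trace_conj_unitary _ _ hU, Matrix.trace_diagonal]
    rw [htr] at h1
    have := congrArg Complex.re h1.symm
    simpa [Complex.re_sum] using this
  -- the integrand rewritten via b
  have key : ∀ l : ℝ,
      ((spectralRpow U p l * a * spectralRpow U p (1 - l) * a).trace).re
      = ∑ i, ∑ j, (p i ^ l) * (p j ^ (1 - l)) * Complex.normSq (b i j) := by
    intro l
    have hM : spectralRpow U p l * a * spectralRpow U p (1 - l) * a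
        = U * (Matrix.diagonal (fun i => ((p i ^ l : ℝ) : ℂ)) * b *
            Matrix.diagonal (fun i => ((p i ^ (1 - l) : ℝ) : ℂ)) * b) * Uᴴ := by
      simp only [spectralRpow, hbdef, Matrix.mul_assoc, hUU, hU, Matrix.mul_one,
        Matrix.one_mul]
    rw [hM, trace_conj_unitary _ _ hU, trace_diag_form _ _ _ hb]
  -- pointwise lower bound
  set C : ℝ := ∑ i, p i * Complex.normSq (b i i) with hC
  have hlow : ∀ l ∈ Set.Icc (0:ℝ) 1,
      C ≤ ((spectralRpow U p l * a * spectralRpow U p (1 - l) * a).trace).re := by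
    intro l _
    rw [key l, hC]
    refine Finset.sum_le_sum fun i _ => ?_
    have hdiag : p i * Complex.normSq (b i i)
        = (p i ^ l) * (p i ^ (1 - l)) * Complex.normSq (b i i) := by
      rw [← Real.rpow_add (hp i)]
      norm_num
    rw [hdiag]
    exact Finset.single_le_sum
      (fun j _ => mul_nonneg (mul_nonneg (Real.rpow_nonneg (hp i).le _)
        (Real.rpow_nonneg (hp j).le _)) (Complex.normSq_nonneg _))
      (Finset.mem_univ i)
  -- continuity / integrability of the integrand
  have hcont : Continuous fun l : ℝ =>
      ((spectralRpow U p l * a * spectralRpow U p (1 - l) * a).trace).re := by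
    have h0 : (fun l : ℝ =>
        ((spectralRpow U p l * a * spectralRpow U p (1 - l) * a).trace).re)
        = fun l => ∑ i, ∑ j, (p i ^ l) * (p j ^ (1 - l)) * Complex.normSq (b i j) :=
      funext key
    rw [h0]
    refine continuous_finset_sum _ fun i _ => continuous_finset_sum _ fun j _ => ?_
    have hrp : ∀ (c : ℝ) (hc : 0 < c), Continuous fun l : ℝ => c ^ l := by
      intro c hc
      have : (fun l : ℝ => c ^ l) = fun l => Real.exp (Real.log c * l) := by
        funext l; exact Real.rpow_def_of_pos hc l
      rw [this]
      exact Real.continuous_exp.comp (continuous_const.mul continuous_id)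
    exact (((hrp _ (hp i)).mul ((hrp _ (hp j)).comp (by continuity))).mul continuous_const)
  -- integral lower bound
  have hint : C ≤ ∫ l in (0:ℝ)..1,
      ((spectralRpow U p l * a * spectralRpow U p (1 - l) * a).trace).re := by
    have h1 : (∫ _ in (0:ℝ)..1, C) = C := by simp
    rw [← h1]
    exact intervalIntegral.integral_mono_on (by norm_num)
      (intervalIntegrable_const) (hcont.intervalIntegrable 0 1) hlow
  refine le_trans ?_ hint
  -- compute (Tr ρ a).re
  have htra : ((ρ * a).trace).re = ∑ i, p i * (b i i).re := by
    have hρa : ρ * a = U * (Matrix.diagonal (fun i => ((p i : ℝ) : ℂ)) * b) * Uᴴ := by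
      simp only [hρ, hbdef, Matrix.mul_assoc, hUU, hU, Matrix.mul_one, Matrix.one_mul]
    rw [hρa, trace_conj_unitary _ _ hU]
    simp only [Matrix.trace, Matrix.diag, Matrix.diagonal_mul, Complex.re_sum]
    refine Finset.sum_congr rfl fun i _ => ?_
    simp [Complex.mul_re]
  rw [htra]
  -- Cauchy–Schwarz step
  have hcs : (∑ i, p i * (b i i).re) ^ 2
      ≤ (∑ i, p i) * ∑ i, p i * ((b i i).re) ^ 2 := by
    have := Finset.sum_mul_sq_le_sq_mul_sq Finset.univ
      (fun i => Real.sqrt (p i)) (fun i => Real.sqrt (p i) * (b i i).re)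
    calc (∑ i, p i * (b i i).re) ^ 2
        = (∑ i, Real.sqrt (p i) * (Real.sqrt (p i) * (b i i).re)) ^ 2 := by
          refine congrArg (· ^ 2) (Finset.sum_congr rfl fun i _ => ?_)
          rw [← mul_assoc, Real.mul_self_sqrt (hp i).le]
      _ ≤ (∑ i, Real.sqrt (p i) ^ 2) * ∑ i, (Real.sqrt (p i) * (b i i).re) ^ 2 := this
      _ = (∑ i, p i) * ∑ i, p i * ((b i i).re) ^ 2 := by
          congr 1
          · exact Finset.sum_congr rfl fun i _ => Real.sq_sqrt (hp i).le
          · refine Finset.sum_congr rfl fun i _ => ?_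
            rw [mul_pow, Real.sq_sqrt (hp i).le]
  rw [hsum, one_mul] at hcs
  refine hcs.trans (Finset.sum_le_sum fun i _ => ?_)
  refine mul_le_mul_of_nonneg_left ?_ (hp i).le
  rw [Complex.normSq_apply]
  nlinarith [sq_nonneg (b i i).im]
end

section
/- Let A and B be n×n complex matrices. Then the derivative at t = 0 of the map t ↦ exp(A + tB) equals ∫₀¹ exp(λA) · B · exp((1−λ)A) dλ. -/
/-!
Differentiating `λ ↦ exp (λ • M) * exp ((1 - λ) • A)` and integrating over `[0, 1]` gives Duhamel's
formula `exp M - exp A = ∫₀¹ exp (λ • M) * (M - A) * exp ((1 - λ) • A) dλ` in any complete normed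
ℝ-algebra. For `M = A + t • B` the right-hand side is `t • g t` with `g` continuous and
`g 0 = ∫₀¹ exp (λ • A) * B * exp ((1 - λ) • A) dλ`, which is therefore the derivative at `t = 0`.
Matrix entries are continuous linear maps, so they commute with the derivative and the integral.
-/

open NormedSpace

theorem hasDerivAt_of_sub_eq_smul {𝕜 E : Type*} [NontriviallyNormedField 𝕜]
    [NormedAddCommGroup E] [NormedSpace 𝕜 E] {f g : 𝕜 → E} {x : 𝕜}
    (hfg : ∀ t, f t - f x = (t - x) • g t) (hg : ContinuousAt g x) :
    HasDerivAt f (g x) x := by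
  rw [hasDerivAt_iff_tendsto_slope]
  refine (hg.tendsto.mono_left nhdsWithin_le_nhds).congr' ?_
  filter_upwards [self_mem_nhdsWithin] with t (ht : t ≠ x)
  rw [slope_def_module, hfg, smul_smul, inv_mul_cancel₀ (sub_ne_zero.2 ht), one_smul]

section RealAlgebra

variable {𝔸 : Type*} [NormedRing 𝔸] [NormedAlgebra ℝ 𝔸] [CompleteSpace 𝔸]

theorem continuous_exp_of_normedAlgebra_real : Continuous (exp : 𝔸 → 𝔸) :=
  continuous_iff_continuousAt.2 fun x => (exp_analytic (𝕂 := ℝ) x).continuousAt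

theorem continuous_exp_smul_mul_mul_exp_one_sub_smul (M B A : 𝔸) :
    Continuous fun l : ℝ => exp (l • M) * B * exp ((1 - l) • A) := by
  have := continuous_exp_of_normedAlgebra_real (𝔸 := 𝔸)
  fun_prop

theorem hasDerivAt_exp_smul_mul_exp_one_sub_smul (M A : 𝔸) (l : ℝ) :
    HasDerivAt (fun l : ℝ => exp (l • M) * exp ((1 - l) • A))
      (exp (l • M) * (M - A) * exp ((1 - l) • A)) l := by
  have hA : HasDerivAt (fun l : ℝ => exp ((1 - l) • A)) (-(A * exp ((1 - l) • A))) l := by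
    simpa [Function.comp_def] using
      (hasDerivAt_exp_smul_const' A (1 - l)).scomp l ((hasDerivAt_id l).const_sub 1)
  refine ((hasDerivAt_exp_smul_const M l).mul hA).congr_deriv ?_
  noncomm_ring

theorem exp_sub_exp_eq_integral (M A : 𝔸) :
    exp M - exp A = ∫ l in (0:ℝ)..1, exp (l • M) * (M - A) * exp ((1 - l) • A) := by
  rw [intervalIntegral.integral_eq_sub_of_hasDerivAt
    (fun l _ => hasDerivAt_exp_smul_mul_exp_one_sub_smul M A l)
    ((continuous_exp_smul_mul_mul_exp_one_sub_smul M (M - A) A).intervalIntegrable 0 1)]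
  simp

theorem hasDerivAt_exp_add_smul (A B : 𝔸) :
    HasDerivAt (fun t : ℝ => exp (A + t • B))
      (∫ l in (0:ℝ)..1, exp (l • A) * B * exp ((1 - l) • A)) 0 := by
  have hexp := continuous_exp_of_normedAlgebra_real (𝔸 := 𝔸)
  set g : ℝ → 𝔸 := fun t => ∫ l in (0:ℝ)..1, exp (l • (A + t • B)) * B * exp ((1 - l) • A)
  have hg : Continuous g :=
    intervalIntegral.continuous_parametric_intervalIntegral_of_continuous' (by fun_prop) 0 1
  have hsub : ∀ t : ℝ, exp (A + t • B) - exp (A + (0:ℝ) • B) = (t - 0) • g t := by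
    intro t
    simp only [zero_smul, add_zero, sub_zero, exp_sub_exp_eq_integral, add_sub_cancel_left, g,
      ← intervalIntegral.integral_smul, mul_smul_comm, smul_mul_assoc]
  simpa [g] using hasDerivAt_of_sub_eq_smul hsub hg.continuousAt

end RealAlgebra

section Matrix

attribute [local instance] Matrix.linftyOpNormedRing Matrix.linftyOpNormedAlgebra

/-- For `n×n` complex matrices `A, B`, the entrywise derivative at `t = 0` of
`t ↦ exp(A + tB)` equals `∫₀¹ exp(λA)·B·exp((1−λ)A) dλ`. -/
theorem deriv_matrix_exp_eq_integral (n : ℕ)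
    (A B : Matrix (Fin n) (Fin n) ℂ) :
    ∀ i j : Fin n,
      HasDerivAt (fun t : ℝ => NormedSpace.exp (A + (t : ℂ) • B) i j)
        (∫ l in (0:ℝ)..1,
          (NormedSpace.exp ((l : ℂ) • A) * B *
            NormedSpace.exp ((((1 - l : ℝ) : ℂ)) • A)) i j)
        0 := by
  intro i j
  have : CompleteSpace (Matrix (Fin n) (Fin n) ℂ) := FiniteDimensional.complete ℝ _
  let entry := (Matrix.entryLinearMap ℝ ℂ i j).toContinuousLinearMap
  have hint := (continuous_exp_smul_mul_mul_exp_one_sub_smul A B A).intervalIntegrable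
    (μ := MeasureTheory.volume) 0 1
  have hderiv := entry.hasFDerivAt.comp_hasDerivAt 0 (hasDerivAt_exp_add_smul A B)
  rw [← entry.intervalIntegral_comp_comm hint] at hderiv
  simp only [Function.comp_def, RCLike.real_smul_eq_coe_smul (K := ℂ)] at hderiv
  exact hderiv

end Matrix
end
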